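/- Let (γ,f₁,f₂) be a pseudo-spherical timelike framed immersion whose curvature has the form (α,ℓ̂,0,n̂), and assume f(s) < 0 for all s ∈ I (which forces n̂²(s) > α²(s)). Define η(s) = (α(s)γ(s) - n̂(s)f₂(s)) / √(n̂²(s)-α²(s)), and let E_a(γ) denote the AdS-evolute (either sign choice). Then for all s: E_a(γ)(s) ∈ AdS³; μ(s) ∈ AdS³ and η(s) ∈ S³₂; ⟨E_a(γ)(s),μ(s)⟩ = ⟨E_a(γ)(s),η(s)⟩ = ⟨μ(s),η(s)⟩ = 0; ⟨E_a(γ)'(s),μ(s)⟩ = ⟨E_a(γ)'(s),η(s)⟩ = 0, so (E_a(γ),μ,η) is a pseudo-spherical spacelike framed curve; moreover ⟨μ'(s),η(s)⟩ = -√(n̂²(s)-α²(s)) and the map s ↦ (E_a(γ)(s),μ(s),η(s)) has nowhere-vanishing derivative (it is an immersion). -/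

import Mathlib

noncomputable section

/-- The index-2 pseudo-scalar product on `ℝ⁴₂`. -/
def pdot (u w : Fin 4 → ℝ) : ℝ :=
  -(u 0 * w 0) - u 1 * w 1 + u 2 * w 2 + u 3 * w 3

/-- 3×3 determinant. -/
def det3 (a b c d e f g h i : ℝ) : ℝ :=
  a * (e * i - f * h) - b * (d * i - f * g) + c * (d * h - e * g)

/-- The triple product `u×v×w` in `ℝ⁴₂`. -/
def tripleProd (u v w : Fin 4 → ℝ) : Fin 4 → ℝ :=
  ![ -det3 (u 1) (u 2) (u 3) (v 1) (v 2) (v 3) (w 1) (w 2) (w 3),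
      det3 (u 0) (u 2) (u 3) (v 0) (v 2) (v 3) (w 0) (w 2) (w 3),
      det3 (u 0) (u 1) (u 3) (v 0) (v 1) (v 3) (w 0) (w 1) (w 3),
     -det3 (u 0) (u 1) (u 2) (v 0) (v 1) (v 2) (w 0) (w 1) (w 2)]

/-- `μ(s) = γ(s)×v₁(s)×v₂(s)`. -/
def muOf (γ v₁ v₂ : ℝ → Fin 4 → ℝ) (s : ℝ) : Fin 4 → ℝ :=
  tripleProd (γ s) (v₁ s) (v₂ s)

/-- Pseudo-spherical spacelike framed curve on the open interval `I`. -/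
structure SpacelikeFramed (I : Set ℝ) (γ v₁ v₂ : ℝ → Fin 4 → ℝ) (ε : ℝ) : Prop where
  smooth_γ : ContDiffOn ℝ (⊤ : ℕ∞) γ I
  smooth_v₁ : ContDiffOn ℝ (⊤ : ℕ∞) v₁ I
  smooth_v₂ : ContDiffOn ℝ (⊤ : ℕ∞) v₂ I
  eps : ε = 1 ∨ ε = -1
  ads : ∀ s ∈ I, pdot (γ s) (γ s) = -1
  normv₁ : ∀ s ∈ I, pdot (v₁ s) (v₁ s) = ε
  normv₂ : ∀ s ∈ I, pdot (v₂ s) (v₂ s) = -ε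
  orth₁ : ∀ s ∈ I, pdot (γ s) (v₁ s) = 0
  orth₂ : ∀ s ∈ I, pdot (γ s) (v₂ s) = 0
  orth₃ : ∀ s ∈ I, pdot (v₁ s) (v₂ s) = 0
  tangent₁ : ∀ s ∈ I, pdot (deriv γ s) (v₁ s) = 0
  tangent₂ : ∀ s ∈ I, pdot (deriv γ s) (v₂ s) = 0

def scurvA (γ v₁ v₂ : ℝ → Fin 4 → ℝ) (s : ℝ) : ℝ := pdot (deriv γ s) (muOf γ v₁ v₂ s)
def scurvL (ε : ℝ) (v₁ v₂ : ℝ → Fin 4 → ℝ) (s : ℝ) : ℝ := -ε * pdot (deriv v₁ s) (v₂ s)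
def scurvM (γ v₁ v₂ : ℝ → Fin 4 → ℝ) (s : ℝ) : ℝ := pdot (deriv v₁ s) (muOf γ v₁ v₂ s)
def scurvN (γ v₁ v₂ : ℝ → Fin 4 → ℝ) (s : ℝ) : ℝ := pdot (deriv v₂ s) (muOf γ v₁ v₂ s)

/-- Pseudo-spherical timelike framed curve on the open interval `I`. -/
structure TimelikeFramed (I : Set ℝ) (γ v₁ v₂ : ℝ → Fin 4 → ℝ) : Prop where
  smooth_γ : ContDiffOn ℝ (⊤ : ℕ∞) γ I
  smooth_v₁ : ContDiffOn ℝ (⊤ : ℕ∞) v₁ I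
  smooth_v₂ : ContDiffOn ℝ (⊤ : ℕ∞) v₂ I
  ads : ∀ s ∈ I, pdot (γ s) (γ s) = -1
  normv₁ : ∀ s ∈ I, pdot (v₁ s) (v₁ s) = 1
  normv₂ : ∀ s ∈ I, pdot (v₂ s) (v₂ s) = 1
  orth₁ : ∀ s ∈ I, pdot (γ s) (v₁ s) = 0
  orth₂ : ∀ s ∈ I, pdot (γ s) (v₂ s) = 0
  orth₃ : ∀ s ∈ I, pdot (v₁ s) (v₂ s) = 0
  tangent₁ : ∀ s ∈ I, pdot (deriv γ s) (v₁ s) = 0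
  tangent₂ : ∀ s ∈ I, pdot (deriv γ s) (v₂ s) = 0

def tcurvA (γ v₁ v₂ : ℝ → Fin 4 → ℝ) (s : ℝ) : ℝ := -pdot (deriv γ s) (muOf γ v₁ v₂ s)
def tcurvL (v₁ v₂ : ℝ → Fin 4 → ℝ) (s : ℝ) : ℝ := pdot (deriv v₁ s) (v₂ s)
def tcurvM (γ v₁ v₂ : ℝ → Fin 4 → ℝ) (s : ℝ) : ℝ := -pdot (deriv v₁ s) (muOf γ v₁ v₂ s)
def tcurvN (γ v₁ v₂ : ℝ → Fin 4 → ℝ) (s : ℝ) : ℝ := -pdot (deriv v₂ s) (muOf γ v₁ v₂ s)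

/-- `g(s)` for the spacelike total evolute. -/
def sG (α ℓh nh : ℝ → ℝ) (εh : ℝ) (s : ℝ) : ℝ :=
  εh * (α s * deriv nh s - nh s * deriv α s) ^ 2
    - (ℓh s) ^ 2 * (nh s) ^ 2 * ((nh s) ^ 2 + εh * (α s) ^ 2)

/-- Total evolute (with the `+` sign) of a spacelike framed immersion with curvature
`(α, ℓ̂, 0, n̂)`. -/
def sEvolute (γ f₁ f₂ : ℝ → Fin 4 → ℝ) (α ℓh nh : ℝ → ℝ) (εh : ℝ) (s : ℝ) : Fin 4 → ℝ :=
  (Real.sqrt |sG α ℓh nh εh s|)⁻¹ •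
    ((ℓh s * nh s) • (nh s • γ s - α s • f₂ s)
      - (α s * deriv nh s - nh s * deriv α s) • f₁ s)

/-- `f(s)` for the timelike total evolute. -/
def tF (α ℓh nh : ℝ → ℝ) (s : ℝ) : ℝ :=
  (α s * deriv nh s - nh s * deriv α s) ^ 2
    - (ℓh s) ^ 2 * (nh s) ^ 2 * ((nh s) ^ 2 - (α s) ^ 2)

/-- Total evolute (with the `+` sign) of a timelike framed immersion with curvature
`(α, ℓ̂, 0, n̂)`. -/
def tEvolute (γ f₁ f₂ : ℝ → Fin 4 → ℝ) (α ℓh nh : ℝ → ℝ) (s : ℝ) : Fin 4 → ℝ :=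
  (Real.sqrt |tF α ℓh nh s|)⁻¹ •
    ((ℓh s * nh s) • (nh s • γ s - α s • f₂ s)
      - (α s * deriv nh s - nh s * deriv α s) • f₁ s)

section AuxLemmas

lemma pdot_comm' (u v : Fin 4 → ℝ) : pdot u v = pdot v u := by simp [pdot]; ring

lemma tp0 (u v w : Fin 4 → ℝ) : tripleProd u v w 0 = -det3 (u 1) (u 2) (u 3) (v 1) (v 2) (v 3) (w 1) (w 2) (w 3) := rfl
lemma tp1 (u v w : Fin 4 → ℝ) : tripleProd u v w 1 = det3 (u 0) (u 2) (u 3) (v 0) (v 2) (v 3) (w 0) (w 2) (w 3) := rfl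
lemma tp2 (u v w : Fin 4 → ℝ) : tripleProd u v w 2 = det3 (u 0) (u 1) (u 3) (v 0) (v 1) (v 3) (w 0) (w 1) (w 3) := rfl
lemma tp3 (u v w : Fin 4 → ℝ) : tripleProd u v w 3 = -det3 (u 0) (u 1) (u 2) (v 0) (v 1) (v 2) (w 0) (w 1) (w 2) := rfl

lemma pdot_triple_fst (u v w : Fin 4 → ℝ) : pdot (tripleProd u v w) u = 0 := by
  simp only [pdot, tp0, tp1, tp2, tp3, det3]; ring
lemma pdot_triple_snd (u v w : Fin 4 → ℝ) : pdot (tripleProd u v w) v = 0 := by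
  simp only [pdot, tp0, tp1, tp2, tp3, det3]; ring
lemma pdot_triple_thd (u v w : Fin 4 → ℝ) : pdot (tripleProd u v w) w = 0 := by
  simp only [pdot, tp0, tp1, tp2, tp3, det3]; ring

lemma pdot_triple_triple (u v w : Fin 4 → ℝ) :
    pdot (tripleProd u v w) (tripleProd u v w) =
      det3 (pdot u u) (pdot u v) (pdot u w) (pdot u v) (pdot v v) (pdot v w)
        (pdot u w) (pdot v w) (pdot w w) := by
  simp only [pdot, tp0, tp1, tp2, tp3, det3]; ring

lemma pdot_comb_left (c1 c2 c3 : ℝ) (u v w x : Fin 4 → ℝ) :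
    pdot (c1 • u + c2 • v + c3 • w) x = c1 * pdot u x + c2 * pdot v x + c3 * pdot w x := by
  simp [pdot, Pi.smul_apply, Pi.add_apply, smul_eq_mul]; ring

lemma pdot_comb_comb (c1 c2 c3 d1 d2 d3 : ℝ) (u v w : Fin 4 → ℝ) :
    pdot (c1 • u + c2 • v + c3 • w) (d1 • u + d2 • v + d3 • w) =
      c1*d1*pdot u u + (c1*d2 + c2*d1)*pdot u v + (c1*d3 + c3*d1)*pdot u w
      + c2*d2*pdot v v + (c2*d3 + c3*d2)*pdot v w + c3*d3*pdot w w := by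
  simp [pdot, Pi.smul_apply, Pi.add_apply, smul_eq_mul]; ring

lemma pdot_smul_right (r : ℝ) (u v : Fin 4 → ℝ) : pdot u (r • v) = r * pdot u v := by
  simp [pdot, Pi.smul_apply, smul_eq_mul]; ring

lemma pdot_zero_left (v : Fin 4 → ℝ) : pdot 0 v = 0 := by simp [pdot]

lemma pdot_smul_sub_right (x y : ℝ) (u v w : Fin 4 → ℝ) :
    pdot u (x • v - y • w) = x * pdot u v - y * pdot u w := by
  simp [pdot, Pi.smul_apply, Pi.sub_apply, smul_eq_mul]; ring

lemma pdot_comb4_right (d1 d2 d3 d4 : ℝ) (u x1 x2 x3 x4 : Fin 4 → ℝ) :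
    pdot u (d1 • x1 + d2 • x2 - (d3 • x3 + d4 • x4)) =
      d1 * pdot u x1 + d2 * pdot u x2 - d3 * pdot u x3 - d4 * pdot u x4 := by
  simp [pdot, Pi.smul_apply, Pi.add_apply, Pi.sub_apply, smul_eq_mul]; ring

lemma hasDerivAt_pdot {a b : ℝ → Fin 4 → ℝ} {a' b' : Fin 4 → ℝ} {s : ℝ}
    (ha : HasDerivAt a a' s) (hb : HasDerivAt b b' s) :
    HasDerivAt (fun t => pdot (a t) (b t)) (pdot a' (b s) + pdot (a s) b') s := by
  have hai := fun i => hasDerivAt_pi.mp ha i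
  have hbi := fun i => hasDerivAt_pi.mp hb i
  have h := ((((hai 0).mul (hbi 0)).neg.sub ((hai 1).mul (hbi 1))).add
      ((hai 2).mul (hbi 2))).add ((hai 3).mul (hbi 3))
  exact (h.congr_deriv (by simp [pdot]; ring)).congr_of_eventuallyEq
    (Filter.Eventually.of_forall fun t => by simp [pdot])

lemma contDiffOn_pdot {a b : ℝ → Fin 4 → ℝ} {I : Set ℝ}
    (ha : ContDiffOn ℝ (⊤ : ℕ∞) a I) (hb : ContDiffOn ℝ (⊤ : ℕ∞) b I) :
    ContDiffOn ℝ (⊤ : ℕ∞) (fun t => pdot (a t) (b t)) I := by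
  have hai : ∀ i, ContDiffOn ℝ (⊤ : ℕ∞) (fun t => a t i) I := fun i =>
    (ContinuousLinearMap.proj (R := ℝ) (φ := fun _ : Fin 4 => ℝ) i).contDiff.comp_contDiffOn ha
  have hbi : ∀ i, ContDiffOn ℝ (⊤ : ℕ∞) (fun t => b t i) I := fun i =>
    (ContinuousLinearMap.proj (R := ℝ) (φ := fun _ : Fin 4 => ℝ) i).contDiff.comp_contDiffOn hb
  simp only [pdot]
  exact ((((hai 0).mul (hbi 0)).neg.sub ((hai 1).mul (hbi 1))).add
      ((hai 2).mul (hbi 2))).add ((hai 3).mul (hbi 3))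

lemma deriv_pdot_const {a b : ℝ → Fin 4 → ℝ} {a' b' : Fin 4 → ℝ} {s c : ℝ}
    (ha : HasDerivAt a a' s) (hb : HasDerivAt b b' s)
    (h : ∀ᶠ t in nhds s, pdot (a t) (b t) = c) :
    pdot a' (b s) + pdot (a s) b' = 0 := by
  have h1 := hasDerivAt_pdot ha hb
  have h2 : HasDerivAt (fun t => pdot (a t) (b t)) 0 s :=
    (hasDerivAt_const s c).congr_of_eventuallyEq h
  exact h1.unique h2

lemma contDiffOn_det3 {a b c d e f g h i : ℝ → ℝ} {I : Set ℝ}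
    (ha : ContDiffOn ℝ (⊤ : ℕ∞) a I) (hb : ContDiffOn ℝ (⊤ : ℕ∞) b I) (hc : ContDiffOn ℝ (⊤ : ℕ∞) c I)
    (hd : ContDiffOn ℝ (⊤ : ℕ∞) d I) (he : ContDiffOn ℝ (⊤ : ℕ∞) e I) (hf : ContDiffOn ℝ (⊤ : ℕ∞) f I)
    (hg : ContDiffOn ℝ (⊤ : ℕ∞) g I) (hh : ContDiffOn ℝ (⊤ : ℕ∞) h I) (hi : ContDiffOn ℝ (⊤ : ℕ∞) i I) :
    ContDiffOn ℝ (⊤ : ℕ∞) (fun t => det3 (a t) (b t) (c t) (d t) (e t) (f t) (g t) (h t) (i t)) I := by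
  simp only [det3]
  exact ((ha.mul ((he.mul hi).sub (hf.mul hh))).sub
    (hb.mul ((hd.mul hi).sub (hf.mul hg)))).add (hc.mul ((hd.mul hh).sub (he.mul hg)))

lemma contDiffOn_muOf {γ f₁ f₂ : ℝ → Fin 4 → ℝ} {I : Set ℝ}
    (h1 : ContDiffOn ℝ (⊤ : ℕ∞) γ I) (h2 : ContDiffOn ℝ (⊤ : ℕ∞) f₁ I) (h3 : ContDiffOn ℝ (⊤ : ℕ∞) f₂ I) :
    ContDiffOn ℝ (⊤ : ℕ∞) (muOf γ f₁ f₂) I := by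
  have c1 : ∀ i, ContDiffOn ℝ (⊤ : ℕ∞) (fun t => γ t i) I := fun i =>
    (ContinuousLinearMap.proj (R := ℝ) (φ := fun _ : Fin 4 => ℝ) i).contDiff.comp_contDiffOn h1
  have c2 : ∀ i, ContDiffOn ℝ (⊤ : ℕ∞) (fun t => f₁ t i) I := fun i =>
    (ContinuousLinearMap.proj (R := ℝ) (φ := fun _ : Fin 4 => ℝ) i).contDiff.comp_contDiffOn h2
  have c3 : ∀ i, ContDiffOn ℝ (⊤ : ℕ∞) (fun t => f₂ t i) I := fun i =>
    (ContinuousLinearMap.proj (R := ℝ) (φ := fun _ : Fin 4 => ℝ) i).contDiff.comp_contDiffOn h3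
  rw [contDiffOn_pi]
  intro i
  fin_cases i
  · exact (contDiffOn_det3 (c1 1) (c1 2) (c1 3) (c2 1) (c2 2) (c2 3) (c3 1) (c3 2) (c3 3)).neg
  · exact contDiffOn_det3 (c1 0) (c1 2) (c1 3) (c2 0) (c2 2) (c2 3) (c3 0) (c3 2) (c3 3)
  · exact contDiffOn_det3 (c1 0) (c1 1) (c1 3) (c2 0) (c2 1) (c2 3) (c3 0) (c3 1) (c3 3)
  · exact (contDiffOn_det3 (c1 0) (c1 1) (c1 2) (c2 0) (c2 1) (c2 2) (c3 0) (c3 1) (c3 2)).neg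

end AuxLemmas
set_option maxHeartbeats 1000000 in
theorem timelike_ads_evolute_is_spacelike_framed_immersion
    (I : Set ℝ) (hI : IsOpen I) (hIc : I.OrdConnected)
    (γ f₁ f₂ : ℝ → Fin 4 → ℝ)
    (hfr : TimelikeFramed I γ f₁ f₂)
    (α ℓh nh : ℝ → ℝ)
    (hA : ∀ s ∈ I, α s = tcurvA γ f₁ f₂ s)
    (hL : ∀ s ∈ I, ℓh s = tcurvL f₁ f₂ s)
    (hM0 : ∀ s ∈ I, tcurvM γ f₁ f₂ s = 0)
    (hN : ∀ s ∈ I, nh s = tcurvN γ f₁ f₂ s)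
    (himm : ∀ s ∈ I, ¬(α s = 0 ∧ ℓh s = 0 ∧ nh s = 0))
    (hf : ∀ s ∈ I, tF α ℓh nh s < 0)
    (η : ℝ → Fin 4 → ℝ)
    (hη : ∀ s, η s = (Real.sqrt ((nh s) ^ 2 - (α s) ^ 2))⁻¹ •
      (α s • γ s - nh s • f₂ s)) :
    ∀ s ∈ I,
      (α s) ^ 2 < (nh s) ^ 2 ∧
      pdot (tEvolute γ f₁ f₂ α ℓh nh s) (tEvolute γ f₁ f₂ α ℓh nh s) = -1 ∧
      pdot (muOf γ f₁ f₂ s) (muOf γ f₁ f₂ s) = -1 ∧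
      pdot (η s) (η s) = 1 ∧
      pdot (tEvolute γ f₁ f₂ α ℓh nh s) (muOf γ f₁ f₂ s) = 0 ∧
      pdot (tEvolute γ f₁ f₂ α ℓh nh s) (η s) = 0 ∧
      pdot (muOf γ f₁ f₂ s) (η s) = 0 ∧
      pdot (deriv (tEvolute γ f₁ f₂ α ℓh nh) s) (muOf γ f₁ f₂ s) = 0 ∧
      pdot (deriv (tEvolute γ f₁ f₂ α ℓh nh) s) (η s) = 0 ∧
      pdot (deriv (muOf γ f₁ f₂) s) (η s) = -Real.sqrt ((nh s) ^ 2 - (α s) ^ 2) ∧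
      ¬(deriv (tEvolute γ f₁ f₂ α ℓh nh) s = 0 ∧
        deriv (muOf γ f₁ f₂) s = 0 ∧ deriv η s = 0) := by
  -- global facts
  have hErepAll : ∀ t, tEvolute γ f₁ f₂ α ℓh nh t =
      ((Real.sqrt |tF α ℓh nh t|)⁻¹ * (ℓh t * nh t * nh t)) • γ t +
      (-((Real.sqrt |tF α ℓh nh t|)⁻¹ * (α t * deriv nh t - nh t * deriv α t))) • f₁ t +
      (-((Real.sqrt |tF α ℓh nh t|)⁻¹ * (ℓh t * nh t * α t))) • f₂ t := by
    intro t; funext i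
    simp [tEvolute, Pi.smul_apply, Pi.add_apply, Pi.sub_apply, smul_eq_mul]; ring
  have hEμ : ∀ t, pdot (tEvolute γ f₁ f₂ α ℓh nh t) (muOf γ f₁ f₂ t) = 0 := by
    intro t
    rw [hErepAll t, pdot_comb_left, pdot_comm' (γ t), pdot_comm' (f₁ t), pdot_comm' (f₂ t)]
    simp only [muOf]
    rw [pdot_triple_fst, pdot_triple_snd, pdot_triple_thd]; ring
  -- smoothness on I
  have cdμ : ContDiffOn ℝ (⊤ : ℕ∞) (muOf γ f₁ f₂) I :=
    contDiffOn_muOf hfr.smooth_γ hfr.smooth_v₁ hfr.smooth_v₂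
  have cdγ' : ContDiffOn ℝ (⊤ : ℕ∞) (deriv γ) I := hfr.smooth_γ.deriv_of_isOpen hI (by simp)
  have cdf₁' : ContDiffOn ℝ (⊤ : ℕ∞) (deriv f₁) I := hfr.smooth_v₁.deriv_of_isOpen hI (by simp)
  have cdf₂' : ContDiffOn ℝ (⊤ : ℕ∞) (deriv f₂) I := hfr.smooth_v₂.deriv_of_isOpen hI (by simp)
  have cdA : ContDiffOn ℝ (⊤ : ℕ∞) (tcurvA γ f₁ f₂) I := (contDiffOn_pdot cdγ' cdμ).neg
  have cdL : ContDiffOn ℝ (⊤ : ℕ∞) (tcurvL f₁ f₂) I := contDiffOn_pdot cdf₁' hfr.smooth_v₂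
  have cdN : ContDiffOn ℝ (⊤ : ℕ∞) (tcurvN γ f₁ f₂) I := (contDiffOn_pdot cdf₂' cdμ).neg
  have cdA' : ContDiffOn ℝ (⊤ : ℕ∞) (deriv (tcurvA γ f₁ f₂)) I := cdA.deriv_of_isOpen hI (by simp)
  have cdN' : ContDiffOn ℝ (⊤ : ℕ∞) (deriv (tcurvN γ f₁ f₂)) I := cdN.deriv_of_isOpen hI (by simp)
  intro s hs
  have hsn : I ∈ nhds s := hI.mem_nhds hs
  -- eventual equalities and differentiability at s
  have heqα : α =ᶠ[nhds s] tcurvA γ f₁ f₂ := Filter.eventuallyEq_of_mem hsn hA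
  have heqL : ℓh =ᶠ[nhds s] tcurvL f₁ f₂ := Filter.eventuallyEq_of_mem hsn hL
  have heqN : nh =ᶠ[nhds s] tcurvN γ f₁ f₂ := Filter.eventuallyEq_of_mem hsn hN
  have dγ : DifferentiableAt ℝ γ s := (hfr.smooth_γ.contDiffAt hsn).differentiableAt (by simp)
  have df₁ : DifferentiableAt ℝ f₁ s := (hfr.smooth_v₁.contDiffAt hsn).differentiableAt (by simp)
  have df₂ : DifferentiableAt ℝ f₂ s := (hfr.smooth_v₂.contDiffAt hsn).differentiableAt (by simp)
  have dμ : DifferentiableAt ℝ (muOf γ f₁ f₂) s := (cdμ.contDiffAt hsn).differentiableAt (by simp)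
  have dα : DifferentiableAt ℝ α s :=
    ((cdA.contDiffAt hsn).differentiableAt (by simp)).congr_of_eventuallyEq heqα
  have dℓ : DifferentiableAt ℝ ℓh s :=
    ((cdL.contDiffAt hsn).differentiableAt (by simp)).congr_of_eventuallyEq heqL
  have dn : DifferentiableAt ℝ nh s :=
    ((cdN.contDiffAt hsn).differentiableAt (by simp)).congr_of_eventuallyEq heqN
  have dα' : DifferentiableAt ℝ (deriv α) s :=
    ((cdA'.contDiffAt hsn).differentiableAt (by simp)).congr_of_eventuallyEq heqα.deriv
  have dn' : DifferentiableAt ℝ (deriv nh) s :=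
    ((cdN'.contDiffAt hsn).differentiableAt (by simp)).congr_of_eventuallyEq heqN.deriv
  have Hγ : HasDerivAt γ (deriv γ s) s := dγ.hasDerivAt
  have Hf₁ : HasDerivAt f₁ (deriv f₁ s) s := df₁.hasDerivAt
  have Hf₂ : HasDerivAt f₂ (deriv f₂ s) s := df₂.hasDerivAt
  have Hμ : HasDerivAt (muOf γ f₁ f₂) (deriv (muOf γ f₁ f₂) s) s := dμ.hasDerivAt
  -- Gram facts at s
  have g11 : pdot (γ s) (γ s) = -1 := hfr.ads s hs
  have g22 : pdot (f₁ s) (f₁ s) = 1 := hfr.normv₁ s hs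
  have g33 : pdot (f₂ s) (f₂ s) = 1 := hfr.normv₂ s hs
  have g12 : pdot (γ s) (f₁ s) = 0 := hfr.orth₁ s hs
  have g13 : pdot (γ s) (f₂ s) = 0 := hfr.orth₂ s hs
  have g23 : pdot (f₁ s) (f₂ s) = 0 := hfr.orth₃ s hs
  have t1 : pdot (deriv γ s) (f₁ s) = 0 := hfr.tangent₁ s hs
  have t2 : pdot (deriv γ s) (f₂ s) = 0 := hfr.tangent₂ s hs
  -- first-order facts
  have q1 : pdot (deriv γ s) (γ s) = 0 := by
    have h := deriv_pdot_const Hγ Hγ (Filter.eventually_of_mem hsn (fun t ht => hfr.ads t ht))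
    rw [pdot_comm' (γ s) (deriv γ s)] at h; linarith
  have q2 : pdot (γ s) (deriv f₁ s) = 0 := by
    have h := deriv_pdot_const Hγ Hf₁ (Filter.eventually_of_mem hsn (fun t ht => hfr.orth₁ t ht))
    rw [t1] at h; linarith
  have q3 : pdot (γ s) (deriv f₂ s) = 0 := by
    have h := deriv_pdot_const Hγ Hf₂ (Filter.eventually_of_mem hsn (fun t ht => hfr.orth₂ t ht))
    rw [t2] at h; linarith
  have q4 : pdot (deriv f₁ s) (f₂ s) = ℓh s := (hL s hs).symm
  have q5 : pdot (f₁ s) (deriv f₂ s) = -ℓh s := by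
    have h := deriv_pdot_const Hf₁ Hf₂ (Filter.eventually_of_mem hsn (fun t ht => hfr.orth₃ t ht))
    rw [q4] at h; linarith
  have q6 : pdot (deriv f₁ s) (f₁ s) = 0 := by
    have h := deriv_pdot_const Hf₁ Hf₁ (Filter.eventually_of_mem hsn (fun t ht => hfr.normv₁ t ht))
    rw [pdot_comm' (f₁ s) (deriv f₁ s)] at h; linarith
  have q7 : pdot (deriv f₂ s) (f₂ s) = 0 := by
    have h := deriv_pdot_const Hf₂ Hf₂ (Filter.eventually_of_mem hsn (fun t ht => hfr.normv₂ t ht))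
    rw [pdot_comm' (f₂ s) (deriv f₂ s)] at h; linarith
  have m1 : pdot (deriv γ s) (muOf γ f₁ f₂ s) = -α s := by
    have h := hA s hs; simp only [tcurvA] at h; linarith
  have m2 : pdot (deriv f₁ s) (muOf γ f₁ f₂ s) = 0 := by
    have h := hM0 s hs; simp only [tcurvM] at h; linarith
  have m3 : pdot (deriv f₂ s) (muOf γ f₁ f₂ s) = -nh s := by
    have h := hN s hs; simp only [tcurvN] at h; linarith
  have oγ : ∀ t, pdot (muOf γ f₁ f₂ t) (γ t) = 0 := fun t => pdot_triple_fst _ _ _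
  have of₁ : ∀ t, pdot (muOf γ f₁ f₂ t) (f₁ t) = 0 := fun t => pdot_triple_snd _ _ _
  have of₂ : ∀ t, pdot (muOf γ f₁ f₂ t) (f₂ t) = 0 := fun t => pdot_triple_thd _ _ _
  have μ1 : pdot (deriv (muOf γ f₁ f₂) s) (γ s) = α s := by
    have h := deriv_pdot_const Hμ Hγ (Filter.Eventually.of_forall oγ)
    rw [pdot_comm' (muOf γ f₁ f₂ s) (deriv γ s), m1] at h; linarith
  have μ2 : pdot (deriv (muOf γ f₁ f₂) s) (f₁ s) = 0 := by
    have h := deriv_pdot_const Hμ Hf₁ (Filter.Eventually.of_forall of₁)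
    rw [pdot_comm' (muOf γ f₁ f₂ s) (deriv f₁ s), m2] at h; linarith
  have μ3 : pdot (deriv (muOf γ f₁ f₂) s) (f₂ s) = nh s := by
    have h := deriv_pdot_const Hμ Hf₂ (Filter.Eventually.of_forall of₂)
    rw [pdot_comm' (muOf γ f₁ f₂ s) (deriv f₂ s), m3] at h; linarith
  -- positivity
  have hFs : tF α ℓh nh s < 0 := hf s hs
  have hd : 0 < nh s ^ 2 - α s ^ 2 := by
    by_contra hc; push_neg at hc
    have h1 : ℓh s ^ 2 * nh s ^ 2 * (nh s ^ 2 - α s ^ 2) ≤ 0 :=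
      mul_nonpos_of_nonneg_of_nonpos (by positivity) hc
    have h2 := hFs; simp only [tF] at h2
    nlinarith [sq_nonneg (α s * deriv nh s - nh s * deriv α s)]
  have hFabs : |tF α ℓh nh s| = -(tF α ℓh nh s) := abs_of_neg hFs
  have hSne : Real.sqrt |tF α ℓh nh s| ≠ 0 := by
    rw [Real.sqrt_ne_zero']; rw [hFabs]; linarith
  have hS : Real.sqrt |tF α ℓh nh s| * Real.sqrt |tF α ℓh nh s| =
      (ℓh s)^2*(nh s)^2*(nh s^2 - α s^2) - (α s * deriv nh s - nh s * deriv α s)^2 := by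
    rw [Real.mul_self_sqrt (abs_nonneg _), hFabs]; simp only [tF]; ring
  have hTne : Real.sqrt (nh s ^ 2 - α s ^ 2) ≠ 0 := (Real.sqrt_pos.mpr hd).ne'
  have hT : Real.sqrt (nh s ^ 2 - α s ^ 2) * Real.sqrt (nh s ^ 2 - α s ^ 2)
      = nh s ^ 2 - α s ^ 2 := Real.mul_self_sqrt hd.le
  -- reps
  have hErep := hErepAll s
  have hηrep : η s = ((Real.sqrt (nh s ^ 2 - α s ^ 2))⁻¹ * α s) • γ s +
      (0:ℝ) • f₁ s + (-((Real.sqrt (nh s ^ 2 - α s ^ 2))⁻¹ * nh s)) • f₂ s := by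
    rw [hη s]; funext i
    simp [Pi.smul_apply, Pi.add_apply, Pi.sub_apply, smul_eq_mul]; ring
  -- pointwise pdot values
  have goal2 : pdot (tEvolute γ f₁ f₂ α ℓh nh s) (tEvolute γ f₁ f₂ α ℓh nh s) = -1 := by
    rw [hErep, pdot_comb_comb, g11, g12, g13, g22, g23, g33]
    have hFdef : tF α ℓh nh s = (α s * deriv nh s - nh s * deriv α s)^2
        - ℓh s^2 * nh s^2 * (nh s^2 - α s^2) := rfl
    have hFne : tF α ℓh nh s ≠ 0 := hFs.ne
    field_simp
    rw [hFabs, Real.sq_sqrt (by linarith)]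
    linear_combination (-1) * hFdef
  have goal3 : pdot (muOf γ f₁ f₂ s) (muOf γ f₁ f₂ s) = -1 := by
    have h := pdot_triple_triple (γ s) (f₁ s) (f₂ s)
    simp only [muOf]
    rw [h, g11, g12, g13, g22, g23, g33]; simp [det3]
  have goal4 : pdot (η s) (η s) = 1 := by
    rw [hηrep, pdot_comb_comb, g11, g12, g13, g22, g23, g33]
    field_simp
    rw [Real.sq_sqrt (by linarith)]; ring
  have goal5 : pdot (tEvolute γ f₁ f₂ α ℓh nh s) (muOf γ f₁ f₂ s) = 0 := hEμ s
  have goal6 : pdot (tEvolute γ f₁ f₂ α ℓh nh s) (η s) = 0 := by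
    rw [hErep, hηrep, pdot_comb_comb, g11, g12, g13, g22, g23, g33]; ring
  have goal7 : pdot (muOf γ f₁ f₂ s) (η s) = 0 := by
    rw [pdot_comm', hηrep, pdot_comb_left,
      pdot_comm' (γ s), pdot_comm' (f₁ s), pdot_comm' (f₂ s), oγ, of₁, of₂]; ring
  -- differentiability of the evolute
  have dtF : DifferentiableAt ℝ (fun t => tF α ℓh nh t) s := by
    simp only [tF]
    exact (((dα.mul dn').sub (dn.mul dα')).pow 2).sub
      (((dℓ.pow 2).mul (dn.pow 2)).mul ((dn.pow 2).sub (dα.pow 2)))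
  have hevF : (fun t => |tF α ℓh nh t|) =ᶠ[nhds s] (fun t => -(tF α ℓh nh t)) := by
    have h : ∀ᶠ t in nhds s, tF α ℓh nh t < 0 := dtF.continuousAt.eventually_lt_const hFs
    exact h.mono fun t ht => abs_of_neg ht
  have hsqF : DifferentiableAt ℝ (fun t => Real.sqrt |tF α ℓh nh t|) s := by
    have h1 : DifferentiableAt ℝ (fun t => Real.sqrt (-(tF α ℓh nh t))) s :=
      dtF.neg.sqrt (by simp; linarith)
    exact h1.congr_of_eventuallyEq (hevF.fun_comp Real.sqrt)
  have dE : DifferentiableAt ℝ (tEvolute γ f₁ f₂ α ℓh nh) s := by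
    have : DifferentiableAt ℝ (fun t => (Real.sqrt |tF α ℓh nh t|)⁻¹ •
        ((ℓh t * nh t) • (nh t • γ t - α t • f₂ t)
          - (α t * deriv nh t - nh t * deriv α t) • f₁ t)) s := by
      exact (hsqF.inv hSne).smul
        (((dℓ.mul dn).smul ((dn.smul dγ).sub (dα.smul df₂))).sub
          (((dα.mul dn').sub (dn.mul dα')).smul df₁))
    exact this
  have HE : HasDerivAt (tEvolute γ f₁ f₂ α ℓh nh) (deriv (tEvolute γ f₁ f₂ α ℓh nh) s) s :=
    dE.hasDerivAt
  -- derivative facts for E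
  have goal8 : pdot (deriv (tEvolute γ f₁ f₂ α ℓh nh) s) (muOf γ f₁ f₂ s) = 0 := by
    have h := deriv_pdot_const HE Hμ (Filter.Eventually.of_forall hEμ)
    have h2 : pdot (tEvolute γ f₁ f₂ α ℓh nh s) (deriv (muOf γ f₁ f₂) s) = 0 := by
      rw [hErep, pdot_comb_left, pdot_comm' (γ s), pdot_comm' (f₁ s), pdot_comm' (f₂ s),
        μ1, μ2, μ3]; ring
    linarith
  have e1 : pdot (tEvolute γ f₁ f₂ α ℓh nh s) (γ s) =
      -((Real.sqrt |tF α ℓh nh s|)⁻¹ * (ℓh s * nh s * nh s)) := by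
    rw [hErep, pdot_comb_left, g11, pdot_comm' (f₁ s), pdot_comm' (f₂ s), g12, g13]; ring
  have e2 : pdot (tEvolute γ f₁ f₂ α ℓh nh s) (deriv γ s) = 0 := by
    rw [hErep, pdot_comb_left, pdot_comm' (γ s), pdot_comm' (f₁ s), pdot_comm' (f₂ s),
      q1, t1, t2]; ring
  have e3 : pdot (tEvolute γ f₁ f₂ α ℓh nh s) (f₂ s) =
      -((Real.sqrt |tF α ℓh nh s|)⁻¹ * (ℓh s * nh s * α s)) := by
    rw [hErep, pdot_comb_left, g13, g23, g33]; ring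
  have e4 : pdot (tEvolute γ f₁ f₂ α ℓh nh s) (deriv f₂ s) =
      (Real.sqrt |tF α ℓh nh s|)⁻¹ * (α s * deriv nh s - nh s * deriv α s) * ℓh s := by
    rw [hErep, pdot_comb_left, q3, q5, pdot_comm' (f₂ s), q7]; ring
  have hWI : ∀ᶠ t in nhds s,
      pdot (tEvolute γ f₁ f₂ α ℓh nh t) (α t • γ t - nh t • f₂ t) = 0 := by
    refine Filter.eventually_of_mem hsn (fun t ht => ?_)
    rw [hErepAll t, pdot_comb_left, pdot_smul_sub_right, pdot_smul_sub_right,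
      pdot_smul_sub_right, hfr.ads t ht, hfr.orth₂ t ht, pdot_comm' (f₁ t) (γ t),
      hfr.orth₁ t ht, hfr.orth₃ t ht, pdot_comm' (f₂ t) (γ t), hfr.orth₂ t ht,
      hfr.normv₂ t ht]
    ring
  have HW : HasDerivAt (fun t => α t • γ t - nh t • f₂ t)
      ((α s • deriv γ s + deriv α s • γ s) - (nh s • deriv f₂ s + deriv nh s • f₂ s)) s :=
    (dα.hasDerivAt.smul Hγ).sub (dn.hasDerivAt.smul Hf₂)
  have goal9 : pdot (deriv (tEvolute γ f₁ f₂ α ℓh nh) s) (η s) = 0 := by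
    have h := deriv_pdot_const HE HW hWI
    have h2 : pdot (tEvolute γ f₁ f₂ α ℓh nh s)
        ((α s • deriv γ s + deriv α s • γ s) - (nh s • deriv f₂ s + deriv nh s • f₂ s)) = 0 := by
      rw [pdot_comb4_right, e1, e2, e3, e4]; ring
    rw [h2, add_zero] at h
    rw [hη s, pdot_smul_right, h, mul_zero]
  have goal10 : pdot (deriv (muOf γ f₁ f₂) s) (η s) = -Real.sqrt (nh s ^ 2 - α s ^ 2) := by
    rw [hη s, pdot_smul_right, pdot_smul_sub_right, μ1, μ3]
    field_simp
    first
    | (rw [Real.sq_sqrt hd.le]; ring)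
    | ring
    | linear_combination hT
    | linear_combination -hT
  refine ⟨by linarith, goal2, goal3, goal4, goal5, goal6, goal7, goal8, goal9, goal10, ?_⟩
  rintro ⟨-, h2, -⟩
  rw [h2, pdot_zero_left] at goal10
  have := Real.sqrt_pos.mpr hd
  linarith
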